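/- Let A and B be atoms (first-order terms) and θ a substitution such that Aθ = Bθ. Then for any substitution η such that (Dom(η) ∩ Var(B)) ∩ Dom(θ) = ∅ and Ran(η) ∩ Dom(θη) = ∅, we have Aθη = Bηθη. -/

import Mathlib

inductive Term (F V : Type) : Type where
  | var : V → Term F V
  | fn : F → List (Term F V) → Term F V

namespace Term

variable {F V : Type}

/-- Substitutions map variables to terms. -/
abbrev Subst (F V : Type) := V → Term F V

mutual
  /-- Apply a substitution to a term. -/
  def subst (σ : Subst F V) : Term F V → Term F V
    | .var x => σ x
    | .fn f ts => .fn f (substList σ ts)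
  def substList (σ : Subst F V) : List (Term F V) → List (Term F V)
    | [] => []
    | t :: ts => subst σ t :: substList σ ts
end

/-- Composition: apply `σ` first, then `τ`. -/
def scomp (σ τ : Subst F V) : Subst F V := fun x => (σ x).subst τ

mutual
  /-- Variables of a term, as a list (with multiplicities). -/
  def varsList : Term F V → List V
    | .var x => [x]
    | .fn _ ts => varsListList ts
  def varsListList : List (Term F V) → List V
    | [] => []
    | t :: ts => varsList t ++ varsListList ts
end

/-- Variables of a term, as a set. -/
def vars (t : Term F V) : Set V := {x | x ∈ t.varsList}

mutual
  def depth : Term F V → ℕ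
    | .var _ => 0
    | .fn _ ts => 1 + depthList ts
  def depthList : List (Term F V) → ℕ
    | [] => 0
    | t :: ts => max (depth t) (depthList ts)
end

/-- Domain of a substitution. -/
def sdom (σ : Subst F V) : Set V := {x | σ x ≠ .var x}

/-- Range (variables) of a substitution. -/
def sran (σ : Subst F V) : Set V := ⋃ x ∈ sdom σ, (σ x).vars

/-- Subterm at a position (a list of argument indices). -/
def subtermAt : List ℕ → Term F V → Option (Term F V)
  | [], t => some t
  | i :: p, .fn _ ts => (ts[i]?).bind (fun t => subtermAt p t)
  | _ :: _, .var _ => none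

/-- Replace the subterm at a position. -/
def replaceAt : List ℕ → Term F V → Term F V → Option (Term F V)
  | [], _, s => some s
  | i :: p, .fn f ts, s =>
      match ts[i]? with
      | some t => (replaceAt p t s).map (fun t' => .fn f (ts.set i t'))
      | none => none
  | _ :: _, .var _, _ => none

/-- Two terms are unifiable. -/
def Unifiable (s t : Term F V) : Prop := ∃ μ : Subst F V, s.subst μ = t.subst μ

/-- A term is ground if it has no variables. -/
def Ground (t : Term F V) : Prop := t.vars = ∅

/-- The variant relation: equality up to a bijective variable renaming. -/
def Variant (s t : Term F V) : Prop :=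
  ∃ ρ : V → V, Function.Bijective ρ ∧ t = s.subst (fun x => .var (ρ x))

/-- A term is linear if no variable occurs twice in it. -/
def Linear (t : Term F V) : Prop := t.varsList.Nodup

/-- A substitution is idempotent. -/
def Idem (σ : Subst F V) : Prop := ∀ x, (σ x).subst σ = σ x

open Classical in
/-- Restriction of a substitution to a set of variables. -/
noncomputable def restrict (σ : Subst F V) (W : Set V) : Subst F V :=
  fun x => if x ∈ W then σ x else .var x

/-- A linear substitution: binding terms are linear and pairwise variable disjoint. -/
def SubstLinear (σ : Subst F V) : Prop :=
  (∀ x, (σ x).Linear) ∧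
    ∀ x y, x ≠ y → x ∈ sdom σ → y ∈ sdom σ → (σ x).vars ∩ (σ y).vars = ∅


end Term

/-
On a variable `x` of `B`, the substitutions `θη` and `ηθη` agree. If `η` does not move `x`,
both send `x` to `xθη`. If it does, then `θ` does not move `x`, so `xθη = xη`; and `xη` is
fixed by `θη` because its variables lie in `Ran(η)`, outside `Dom(θη)`. Hence
`Aθη = Bθη = Bηθη`.
-/

namespace Term

variable {F V : Type}

mutual
theorem subst_congr (σ τ : Subst F V) :
    ∀ t : Term F V, (∀ x ∈ t.vars, σ x = τ x) → t.subst σ = t.subst τ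
  | .var x, h => h x (by simp [vars, varsList])
  | .fn f ts, h => by
    simp only [subst]
    rw [substList_congr σ τ ts fun x hx => h x (by simpa [vars, varsList] using hx)]
theorem substList_congr (σ τ : Subst F V) :
    ∀ ts : List (Term F V), (∀ x ∈ varsListList ts, σ x = τ x) →
      substList σ ts = substList τ ts
  | [], _ => rfl
  | t :: ts, h => by
    simp only [substList]
    rw [subst_congr σ τ t fun x hx => h x (by simp [varsListList, hx.out]),
      substList_congr σ τ ts fun x hx => h x (by simp [varsListList, hx])]
end

mutual
theorem subst_var : ∀ t : Term F V, t.subst .var = t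
  | .var _ => rfl
  | .fn f ts => by simp only [subst]; rw [substList_var ts]
theorem substList_var : ∀ ts : List (Term F V), substList .var ts = ts
  | [] => rfl
  | t :: ts => by simp only [substList]; rw [subst_var t, substList_var ts]
end

mutual
theorem subst_subst (σ τ : Subst F V) :
    ∀ t : Term F V, (t.subst σ).subst τ = t.subst (scomp σ τ)
  | .var _ => rfl
  | .fn f ts => by simp only [subst]; rw [substList_substList σ τ ts]
theorem substList_substList (σ τ : Subst F V) :
    ∀ ts : List (Term F V), substList τ (substList σ ts) = substList (scomp σ τ) ts
  | [] => rfl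
  | t :: ts => by
    simp only [substList]; rw [subst_subst σ τ t, substList_substList σ τ ts]
end

theorem subst_eq_self {σ : Subst F V} {t : Term F V} (h : ∀ x ∈ t.vars, x ∉ sdom σ) :
    t.subst σ = t := by
  rw [subst_congr σ .var t fun x hx => not_not.mp (h x hx), subst_var]

theorem vars_subset_sran {σ : Subst F V} {x : V} (hx : x ∈ sdom σ) : (σ x).vars ⊆ sran σ :=
  Set.subset_biUnion_of_mem (u := fun x => (σ x).vars) hx

theorem scomp_scomp_apply {θ η : Subst F V} (h : sran η ∩ sdom (scomp θ η) = ∅) {x : V}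
    (hx : x ∈ sdom η → x ∉ sdom θ) : scomp η (scomp θ η) x = scomp θ η x := by
  by_cases hη : x ∈ sdom η
  · have hθ : θ x = .var x := not_not.mp (hx hη)
    have hfix : (η x).subst (scomp θ η) = η x :=
      subst_eq_self fun y hy hy' => h.subset ⟨vars_subset_sran hη hy, hy'⟩
    simpa only [scomp, hθ, subst] using hfix
  · have hη' : η x = .var x := not_not.mp hη
    simp only [scomp, hη', subst]

end Term

/-- if `Aθ = Bθ` then `Aθη = Bηθη` whenever
`(Dom(η) ∩ Var(B)) ∩ Dom(θ) = ∅` and `Ran(η) ∩ Dom(θη) = ∅`. -/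
theorem stmt0 {F V : Type} (A B : Term F V) (θ η : Term.Subst F V)
    (hAB : A.subst θ = B.subst θ)
    (h1 : (Term.sdom η ∩ B.vars) ∩ Term.sdom θ = ∅)
    (h2 : Term.sran η ∩ Term.sdom (Term.scomp θ η) = ∅) :
    (A.subst θ).subst η = ((B.subst η).subst θ).subst η := by
  rw [hAB, Term.subst_subst, Term.subst_subst, Term.subst_subst]
  refine Term.subst_congr _ _ B fun x hx => (Term.scomp_scomp_apply h2 fun hη hθ => ?_).symm
  exact h1.subset ⟨⟨hη, hx⟩, hθ⟩
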